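/- arXiv:2307.01867 — 5 statements merged into one kernel-verified Lean document; each statement's English description precedes it below -/
import Mathlib

section
/- If x(t) satisfies x'(t) = s*x*log(x_max/x) with 0 < x(t) < x_max, then for every n ≥ 1, the n-th derivative satisfies x^(n)(t) = s^n * x * Σ_{k=1}^{n} (-1)^{n-k} * S(n,k) * (log(x_max/x))^k, where S(n,k) denotes the Stirling number of the second kind. -/
/-!
With `u = log (xmax / x)` the ODE gives `u' = -s u`, so differentiating `x · P(u)` for a polynomial
`P` yields `s · x · (X (P - P'))(u)`. Hence `x⁽ⁿ⁾ = sⁿ · x · Pₙ(u)` with `P₀ = 1`,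
`Pₙ₊₁ = X (Pₙ - Pₙ')`, and on coefficients this recursion is the Stirling recurrence
`S(n+1, k+1) = (k+1) S(n, k+1) + S(n, k)` twisted by the sign `(-1)^(n-k)`.
-/

/-- Stirling numbers of the second kind: number of partitions of an `n`-set
into `k` nonempty blocks, via the standard recurrence. -/
def stirlingSecond : ℕ → ℕ → ℕ
  | 0, 0 => 1
  | 0, _ + 1 => 0
  | _ + 1, 0 => 0
  | n + 1, k + 1 => (k + 1) * stirlingSecond n (k + 1) + stirlingSecond n k

open Polynomial

theorem stirlingSecond_eq_nat_stirlingSecond : stirlingSecond = Nat.stirlingSecond := by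
  funext n k
  induction n generalizing k with
  | zero => cases k <;> rfl
  | succ n ih => cases k <;> simp [stirlingSecond, Nat.stirlingSecond_succ_succ, ih]

section GompertzPoly

variable (R : Type*) [CommRing R]

noncomputable def gompertzPoly : ℕ → R[X]
  | 0 => 1
  | n + 1 => X * (gompertzPoly n - derivative (gompertzPoly n))

theorem gompertzPoly_coeff (n k : ℕ) :
    (gompertzPoly R n).coeff k = (-1) ^ (n - k) * Nat.stirlingSecond n k := by
  induction n generalizing k with
  | zero => cases k <;> simp [gompertzPoly, coeff_one]
  | succ n ih =>
    cases k with
    | zero => simp [gompertzPoly]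
    | succ k =>
      rw [gompertzPoly, coeff_X_mul, coeff_sub, coeff_derivative, ih, ih,
        Nat.stirlingSecond_succ_succ]
      rcases lt_or_ge k n with hkn | hnk
      · obtain ⟨m, rfl⟩ := Nat.exists_eq_add_of_lt hkn
        rw [show k + m + 1 - k = m + 1 by omega, show k + m + 1 - (k + 1) = m by omega,
          show k + m + 1 + 1 - (k + 1) = m + 1 by omega]
        push_cast
        ring
      · rw [Nat.stirlingSecond_eq_zero_of_lt (by omega : n < k + 1),
          show n + 1 - (k + 1) = n - k by omega]
        simp

theorem gompertzPoly_natDegree_le (n : ℕ) : (gompertzPoly R n).natDegree ≤ n :=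
  natDegree_le_iff_coeff_eq_zero.2 fun k hk => by
    simp [gompertzPoly_coeff, Nat.stirlingSecond_eq_zero_of_lt hk]

theorem gompertzPoly_eval (n : ℕ) (v : R) :
    (gompertzPoly R n).eval v =
      ∑ k ∈ Finset.range (n + 1), (-1) ^ (n - k) * (Nat.stirlingSecond n k : R) * v ^ k := by
  simp [eval_eq_sum_range' (Nat.lt_succ_of_le (gompertzPoly_natDegree_le R n)),
    gompertzPoly_coeff]

end GompertzPoly

theorem HasDerivAt.log_const_div {f : ℝ → ℝ} {f' c t : ℝ} (hf : HasDerivAt f f' t)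
    (hc : c ≠ 0) (ht : f t ≠ 0) :
    HasDerivAt (fun t => Real.log (c / f t)) (-(f' / f t)) t := by
  convert ((hasDerivAt_const t c).fun_div hf ht).log (div_ne_zero hc ht) using 1
  field_simp
  ring

section GompertzODE

variable {s c : ℝ} {x : ℝ → ℝ}

theorem hasDerivAt_mul_eval_log_div_of_gompertz {t : ℝ}
    (hode : HasDerivAt x (s * x t * Real.log (c / x t)) t) (hc : c ≠ 0) (hx : x t ≠ 0)
    (p : ℝ[X]) :
    HasDerivAt (fun t => x t * p.eval (Real.log (c / x t)))
      (s * (x t * (X * (p - derivative p)).eval (Real.log (c / x t)))) t := by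
  have hu := hode.log_const_div hc hx
  refine (hode.fun_mul ((p.hasDerivAt _).comp t hu)).congr_deriv ?_
  simp only [eval_mul, eval_sub, eval_X, Function.comp_apply]
  field_simp
  ring

theorem iteratedDeriv_eq_of_gompertz
    (hode : ∀ t, HasDerivAt x (s * x t * Real.log (c / x t)) t) (hc : c ≠ 0) (hx : ∀ t, x t ≠ 0)
    (n : ℕ) :
    iteratedDeriv n x = fun t => s ^ n * (x t * (gompertzPoly ℝ n).eval (Real.log (c / x t))) := by
  induction n with
  | zero => funext t; simp [gompertzPoly]
  | succ n ih =>
    funext t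
    rw [iteratedDeriv_succ, ih,
      ((hasDerivAt_mul_eval_log_div_of_gompertz (hode t) hc (hx t) _).const_mul (s ^ n)).deriv,
      gompertzPoly]
    ring

end GompertzODE

theorem gompertz_nth_derivative_general (s xmax : ℝ) (hxmax : 0 < xmax)
    (x : ℝ → ℝ)
    (hode : ∀ t, HasDerivAt x (s * x t * Real.log (xmax / x t)) t)
    (hpos : ∀ t, 0 < x t) :
    ∀ n : ℕ, 1 ≤ n → ∀ t : ℝ,
      iteratedDeriv n x t =
        s ^ n * x t * ∑ k ∈ Finset.Icc 1 n,
          (-1 : ℝ) ^ (n - k) * (stirlingSecond n k : ℝ) *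
            Real.log (xmax / x t) ^ k := by
  intro n hn t
  obtain ⟨m, rfl⟩ := Nat.exists_eq_add_of_le' hn
  rw [iteratedDeriv_eq_of_gompertz hode hxmax.ne' (fun t => (hpos t).ne')]
  beta_reduce
  rw [gompertzPoly_eval, Finset.range_eq_Ico, Finset.sum_eq_sum_Ico_succ_bot (Nat.succ_pos _),
    Nat.succ_eq_add_one, zero_add, Finset.Ico_add_one_right_eq_Icc,
    stirlingSecond_eq_nat_stirlingSecond, Nat.stirlingSecond_succ_zero]
  simp only [Nat.cast_zero, mul_zero, zero_mul, zero_add]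
  ring

theorem gompertz_nth_derivative (s xmax : ℝ) (hs : 0 < s) (hxmax : 0 < xmax)
    (x : ℝ → ℝ)
    (hode : ∀ t, HasDerivAt x (s * x t * Real.log (xmax / x t)) t)
    (hpos : ∀ t, 0 < x t) (hlt : ∀ t, x t < xmax) :
    ∀ n : ℕ, 1 ≤ n → ∀ t : ℝ,
      iteratedDeriv n x t =
        s ^ n * x t * ∑ k ∈ Finset.Icc 1 n,
          (-1 : ℝ) ^ (n - k) * (stirlingSecond n k : ℝ) *
            Real.log (xmax / x t) ^ k :=
  gompertz_nth_derivative_general s xmax hxmax x hode hpos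
end

section
/- For the standard Gompertz function x(t) = exp(-exp(-t)), and each n ≥ 1, the n-th derivative equals (-1)^n * x(t) * Σ_{k=1}^{n} S(n,k) * (log x(t))^k, where S(n,k) is the Stirling number of the second kind. -/
open Polynomial

noncomputable def touchard (R : Type*) [CommSemiring R] : ℕ → R[X]
  | 0 => 1
  | n + 1 => X * (touchard R n + derivative (touchard R n))

section Touchard

variable (R : Type*) [CommSemiring R]

theorem coeff_touchard (n k : ℕ) : (touchard R n).coeff k = stirlingSecond n k := by
  induction n generalizing k with
  | zero => cases k <;> simp [touchard, stirlingSecond, coeff_one]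
  | succ n ih =>
    cases k with
    | zero => simp [touchard, stirlingSecond]
    | succ k =>
      rw [touchard, coeff_X_mul, coeff_add, coeff_derivative, ih, ih, stirlingSecond]
      push_cast
      ring

theorem natDegree_touchard_le (n : ℕ) : (touchard R n).natDegree ≤ n :=
  natDegree_le_iff_coeff_eq_zero.2 fun k hk => by
    rw [coeff_touchard, stirlingSecond_eq_nat_stirlingSecond,
      Nat.stirlingSecond_eq_zero_of_lt (by exact_mod_cast hk), Nat.cast_zero]

theorem eval_touchard {n : ℕ} (hn : 1 ≤ n) (u : R) :
    (touchard R n).eval u = ∑ k ∈ Finset.Icc 1 n, (stirlingSecond n k : R) * u ^ k := by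
  rw [eval_eq_sum_range' (Nat.lt_succ_of_le (natDegree_touchard_le R n)), Finset.range_eq_Ico,
    Finset.sum_eq_sum_Ico_succ_bot (Nat.succ_pos n)]
  obtain ⟨m, rfl⟩ := Nat.exists_eq_add_of_le' hn
  simp only [coeff_touchard, stirlingSecond, Nat.cast_zero, zero_mul, zero_add, Nat.succ_eq_add_one,
    Finset.Ico_add_one_right_eq_Icc]

end Touchard

theorem hasDerivAt_exp_mul_eval_of_hasDerivAt_const_mul {u : ℝ → ℝ} {c : ℝ}
    (hu : ∀ t, HasDerivAt u (c * u t) t) (P : ℝ[X]) (t : ℝ) :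
    HasDerivAt (fun t => Real.exp (u t) * P.eval (u t))
      (c * (Real.exp (u t) * (X * (P + derivative P)).eval (u t))) t := by
  refine ((hu t).exp.fun_mul ((P.hasDerivAt (u t)).comp t (hu t))).congr_deriv ?_
  simp only [eval_mul, eval_X, eval_add, Function.comp_apply]
  ring

theorem iteratedDeriv_exp_comp_of_hasDerivAt_const_mul {u : ℝ → ℝ} {c : ℝ}
    (hu : ∀ t, HasDerivAt u (c * u t) t) (n : ℕ) :
    iteratedDeriv n (fun t => Real.exp (u t)) =
      fun t => c ^ n * (Real.exp (u t) * (touchard ℝ n).eval (u t)) := by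
  induction n with
  | zero => simp [touchard]
  | succ n ih =>
    rw [iteratedDeriv_succ, ih]
    funext t
    rw [((hasDerivAt_exp_mul_eval_of_hasDerivAt_const_mul hu _ t).const_mul (c ^ n)).deriv,
      touchard, pow_succ, mul_assoc]

theorem standard_gompertz_nth_derivative
    (x : ℝ → ℝ) (hxdef : ∀ t, x t = Real.exp (-Real.exp (-t))) :
    ∀ n : ℕ, 1 ≤ n → ∀ t : ℝ,
      iteratedDeriv n x t =
        (-1 : ℝ) ^ n * x t * ∑ k ∈ Finset.Icc 1 n,
          (stirlingSecond n k : ℝ) * Real.log (x t) ^ k := by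
  obtain rfl : x = fun t => Real.exp (-Real.exp (-t)) := funext hxdef
  have hu : ∀ t, HasDerivAt (fun t => -Real.exp (-t)) (-1 * -Real.exp (-t)) t := fun t =>
    (hasDerivAt_neg t).exp.fun_neg.congr_deriv (by ring)
  intro n hn t
  rw [iteratedDeriv_exp_comp_of_hasDerivAt_const_mul hu]
  beta_reduce
  rw [Real.log_exp, eval_touchard ℝ hn, mul_assoc]
end

section
/- The integral of the square of the second derivative of x(t) = exp(-exp(-t)), namely ∫_{-∞}^{∞} (exp(-exp(-t)) * exp(-t) * (exp(-t) - 1))^2 dt, equals 1/8. -/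
open MeasureTheory Set Real
open scoped Nat

/-!
Substituting `u = exp (-t)` turns the integral into `∫ u in Ioi 0, u * (u - 1) ^ 2 * exp (-(2 * u))`,
a combination of the Gamma integrals `∫ u in Ioi 0, u ^ n * exp (-(2 * u)) = n ! / 2 ^ (n + 1)`:
`3! / 2 ^ 4 - 2 * 2! / 2 ^ 3 + 1! / 2 ^ 2 = 1 / 8`.
-/

section Substitution

variable {E : Type*} [NormedAddCommGroup E] [NormedSpace ℝ E]

theorem integral_exp_smul_comp_exp (g : ℝ → E) :
    ∫ x, exp x • g (exp x) = ∫ y in Ioi 0, g y := by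
  rw [← range_exp, ← image_univ, integral_image_eq_integral_abs_deriv_smul MeasurableSet.univ
    (fun x _ ↦ (hasDerivAt_exp x).hasDerivWithinAt) exp_injective.injOn, setIntegral_univ]
  simp_rw [abs_of_pos (exp_pos _)]

theorem integral_exp_neg_smul_comp_exp_neg (g : ℝ → E) :
    ∫ t, exp (-t) • g (exp (-t)) = ∫ y in Ioi 0, g y := by
  rw [integral_neg_eq_self (fun t ↦ exp t • g (exp t)), integral_exp_smul_comp_exp]

end Substitution

theorem integrableOn_pow_mul_exp_neg_mul_Ioi (n : ℕ) {b : ℝ} (hb : 0 < b) :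
    IntegrableOn (fun u ↦ u ^ n * exp (-(b * u))) (Ioi 0) := by
  simpa using integrableOn_rpow_mul_exp_neg_mul_rpow (s := n) (p := 1)
    (neg_one_lt_zero.trans_le n.cast_nonneg) one_pos hb

theorem integral_pow_mul_exp_neg_mul_Ioi (n : ℕ) {b : ℝ} (hb : 0 < b) :
    ∫ u in Ioi 0, u ^ n * exp (-(b * u)) = n ! / b ^ (n + 1) := by
  have h := integral_rpow_mul_exp_neg_mul_Ioi (a := n + 1) (by positivity) hb
  rw [add_sub_cancel_right, Real.Gamma_nat_eq_factorial] at h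
  norm_cast at h
  rw [h, one_div_pow, one_div_mul_eq_div]

theorem integral_mul_sub_one_sq_mul_exp_neg_two_mul_Ioi :
    ∫ u in Ioi 0, u * (u - 1) ^ 2 * exp (-(2 * u)) = 1 / 8 := by
  have hint (n : ℕ) := integrableOn_pow_mul_exp_neg_mul_Ioi n two_pos
  calc ∫ u in Ioi 0, u * (u - 1) ^ 2 * exp (-(2 * u))
      = ∫ u in Ioi 0, (u ^ 3 * exp (-(2 * u)) - 2 * (u ^ 2 * exp (-(2 * u)))
          + u ^ 1 * exp (-(2 * u))) := by
        congr 1; ext u; ring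
    _ = (3 ! / 2 ^ 4 - 2 * (2 ! / 2 ^ 3) + 1 ! / 2 ^ 2 : ℝ) := by
        rw [integral_add ?_ (hint 1), integral_sub (hint 3) ((hint 2).const_mul 2),
          integral_const_mul]
        · simp only [integral_pow_mul_exp_neg_mul_Ioi _ two_pos]
        · exact (hint 3).sub ((hint 2).const_mul 2)
    _ = 1 / 8 := by norm_num [Nat.factorial]

theorem gompertz_second_deriv_sq_integral :
    ∫ t : ℝ, (Real.exp (-Real.exp (-t)) * Real.exp (-t) * (Real.exp (-t) - 1)) ^ 2 =
      1 / 8 := by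
  calc ∫ t : ℝ, (exp (-exp (-t)) * exp (-t) * (exp (-t) - 1)) ^ 2
      = ∫ t : ℝ, exp (-t) • (exp (-t) * (exp (-t) - 1) ^ 2 * exp (-(2 * exp (-t)))) := by
        congr 1; ext t
        rw [smul_eq_mul, show -(2 * exp (-t)) = -exp (-t) + -exp (-t) by ring, exp_add]
        ring
    _ = ∫ u in Ioi 0, u * (u - 1) ^ 2 * exp (-(2 * u)) :=
        integral_exp_neg_smul_comp_exp_neg fun u ↦ u * (u - 1) ^ 2 * exp (-(2 * u))
    _ = 1 / 8 := integral_mul_sub_one_sq_mul_exp_neg_two_mul_Ioi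
end

section
/- The function ψ₂(t) = 2√2 * exp(-exp(-t)) * exp(-t) * (exp(-t) - 1) has L² norm equal to 1 and integral over ℝ equal to 0. -/
/-!
In the variable `u = exp (-t)` the wavelet is `ψ₂ = 2√2 u (1 - u) e^{-u} · (-u)`, i.e. the
chain-rule derivative of `P (exp (-t))` with `P u = 2√2 u e^{-u}`; likewise
`ψ₂² = 8 u² (u - 1)² e^{-2u}` is the derivative of `Q (exp (-t))` with
`Q u = (4u³ - 2u² + 2u + 1) e^{-2u}`. As `t → +∞` we have `u → 0` and as `t → -∞` we have
`u → +∞`, so `∫ ψ₂ = P 0 - 0 = 0` and `∫ ψ₂² = Q 0 - 0 = 1`. Integrability comes for free: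
`ψ₂` is a derivative of constant sign on each half-line, and `ψ₂² ≥ 0`.
-/

open MeasureTheory Set Filter Real Topology Polynomial

theorem integrableOn_Iic_deriv_of_nonneg' {g g' : ℝ → ℝ} {a l : ℝ}
    (hderiv : ∀ x ∈ Iic a, HasDerivAt g (g' x) x) (g'pos : ∀ x ∈ Iio a, 0 ≤ g' x)
    (hg : Tendsto g atBot (𝓝 l)) : IntegrableOn g' (Iic a) := by
  have hreflected : IntegrableOn (fun x => -g' (-x)) (Ioi (-a)) := by
    refine integrableOn_Ioi_deriv_of_nonpos' (g := fun x => g (-x)) (fun x hx => ?_)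
      (fun x hx => ?_) (hg.comp tendsto_neg_atTop_atBot)
    · exact ((hderiv (-x) (neg_le.mp hx.out)).comp x (hasDerivAt_neg x)).congr_deriv
        (mul_neg_one _)
    · exact neg_nonpos.mpr (g'pos (-x) (neg_lt.mp hx.out))
  rw [integrableOn_Iic_iff_integrableOn_Iio,
    ← (Measure.measurePreserving_neg volume).integrableOn_comp_preimage
      (Homeomorph.neg ℝ).measurableEmbedding]
  simpa [Function.comp_def] using hreflected.neg

theorem tendsto_eval_mul_exp_neg_atTop (p : ℝ[X]) :
    Tendsto (fun x => p.eval x * exp (-x)) atTop (𝓝 0) := by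
  simpa [div_eq_mul_inv, exp_neg] using p.tendsto_div_exp_atTop

lemma tendsto_comp_exp_neg_atBot {P : ℝ → ℝ} {l : ℝ} (hP : Tendsto P atTop (𝓝 l)) :
    Tendsto (fun t => P (exp (-t))) atBot (𝓝 l) :=
  hP.comp (tendsto_exp_atTop.comp tendsto_neg_atBot_atTop)

lemma tendsto_comp_exp_neg_atTop {P : ℝ → ℝ} (hP : ContinuousAt P 0) :
    Tendsto (fun t => P (exp (-t))) atTop (𝓝 (P 0)) :=
  hP.tendsto.comp tendsto_exp_neg_atTop_nhds_zero

noncomputable def gompertzWavelet (t : ℝ) : ℝ :=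
  2 * √2 * (exp (-exp (-t)) * exp (-t) * (exp (-t) - 1))

noncomputable def primitiveOfWavelet (u : ℝ) : ℝ := 2 * √2 * u * exp (-u)

noncomputable def primitiveOfWaveletSq (u : ℝ) : ℝ :=
  (4 * u ^ 3 - 2 * u ^ 2 + 2 * u + 1) * exp (-(2 * u))

lemma hasDerivAt_primitiveOfWavelet (u : ℝ) :
    HasDerivAt primitiveOfWavelet (2 * √2 * (1 - u) * exp (-u)) u := by
  have := ((hasDerivAt_id u).const_mul (2 * √2)).mul (hasDerivAt_neg u).exp
  exact this.congr_deriv (by simp only [mul_one, id_eq, mul_neg]; ring)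

lemma hasDerivAt_primitiveOfWaveletSq (u : ℝ) :
    HasDerivAt primitiveOfWaveletSq (-8 * u * (u - 1) ^ 2 * exp (-(2 * u))) u := by
  have hpoly : HasDerivAt (fun u : ℝ => 4 * u ^ 3 - 2 * u ^ 2 + 2 * u + 1)
      (12 * u ^ 2 - 4 * u + 2) u := by
    refine ((((hasDerivAt_pow 3 u).const_mul 4).sub ((hasDerivAt_pow 2 u).const_mul 2)).add
      ((hasDerivAt_id u).const_mul 2)).add_const 1 |>.congr_deriv ?_
    push_cast; ring
  have := hpoly.mul ((hasDerivAt_id u).const_mul 2).neg.exp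
  exact this.congr_deriv (by simp only [id_eq, Pi.neg_apply, mul_one, mul_neg, neg_mul]; ring)

lemma hasDerivAt_primitiveOfWavelet_exp_neg (t : ℝ) :
    HasDerivAt (fun t => primitiveOfWavelet (exp (-t))) (gompertzWavelet t) t := by
  have := (hasDerivAt_primitiveOfWavelet _).comp t (hasDerivAt_neg t).exp
  exact this.congr_deriv (by simp only [mul_neg, mul_one, gompertzWavelet]; ring)

lemma hasDerivAt_primitiveOfWaveletSq_exp_neg (t : ℝ) :
    HasDerivAt (fun t => primitiveOfWaveletSq (exp (-t))) (gompertzWavelet t ^ 2) t := by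
  have := (hasDerivAt_primitiveOfWaveletSq _).comp t (hasDerivAt_neg t).exp
  refine this.congr_deriv ?_
  have hexp : exp (-(2 * exp (-t))) = exp (-exp (-t)) ^ 2 := by rw [← exp_nat_mul]; ring_nf
  simp only [gompertzWavelet, mul_pow, sq_sqrt zero_le_two, hexp]
  ring

lemma tendsto_primitiveOfWavelet_atTop : Tendsto primitiveOfWavelet atTop (𝓝 0) := by
  unfold primitiveOfWavelet
  simpa [mul_assoc] using (tendsto_pow_mul_exp_neg_atTop_nhds_zero 1).const_mul (2 * √2)

lemma tendsto_primitiveOfWaveletSq_atTop : Tendsto primitiveOfWaveletSq atTop (𝓝 0) := by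
  have := (tendsto_eval_mul_exp_neg_atTop (4 * X ^ 3 - 2 * X ^ 2 + 2 * X + 1)).mul
    tendsto_exp_neg_atTop_nhds_zero
  rw [mul_zero] at this
  refine this.congr fun u => ?_
  simp only [primitiveOfWaveletSq, eval_add, eval_sub, eval_mul, eval_pow, eval_X, eval_ofNat,
    eval_one]
  rw [mul_assoc, ← exp_add]
  ring_nf

lemma gompertzWavelet_nonneg_of_nonpos {t : ℝ} (ht : t ≤ 0) : 0 ≤ gompertzWavelet t := by
  have : 0 ≤ exp (-t) - 1 := sub_nonneg.mpr (one_le_exp (neg_nonneg.mpr ht))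
  unfold gompertzWavelet
  positivity

lemma gompertzWavelet_nonpos_of_nonneg {t : ℝ} (ht : 0 ≤ t) : gompertzWavelet t ≤ 0 := by
  have : exp (-t) - 1 ≤ 0 := sub_nonpos.mpr (exp_le_one_iff.mpr (neg_nonpos.mpr ht))
  unfold gompertzWavelet
  exact mul_nonpos_of_nonneg_of_nonpos (by positivity)
    (mul_nonpos_of_nonneg_of_nonpos (by positivity) this)

lemma integrable_gompertzWavelet : Integrable gompertzWavelet := by
  rw [← integrableOn_univ, ← Iic_union_Ioi (a := 0)]
  exact (integrableOn_Iic_deriv_of_nonneg' (fun t _ => hasDerivAt_primitiveOfWavelet_exp_neg t)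
      (fun t ht => gompertzWavelet_nonneg_of_nonpos ht.out.le)
      (tendsto_comp_exp_neg_atBot tendsto_primitiveOfWavelet_atTop)).union
    (integrableOn_Ioi_deriv_of_nonpos' (fun t _ => hasDerivAt_primitiveOfWavelet_exp_neg t)
      (fun t ht => gompertzWavelet_nonpos_of_nonneg ht.out.le)
      (tendsto_comp_exp_neg_atTop (hasDerivAt_primitiveOfWavelet 0).continuousAt))

lemma integrable_gompertzWavelet_sq : Integrable fun t => gompertzWavelet t ^ 2 := by
  rw [← integrableOn_univ, ← Iic_union_Ioi (a := 0)]
  exact (integrableOn_Iic_deriv_of_nonneg' (fun t _ => hasDerivAt_primitiveOfWaveletSq_exp_neg t)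
      (fun t _ => sq_nonneg _)
      (tendsto_comp_exp_neg_atBot tendsto_primitiveOfWaveletSq_atTop)).union
    (integrableOn_Ioi_deriv_of_nonneg' (fun t _ => hasDerivAt_primitiveOfWaveletSq_exp_neg t)
      (fun t _ => sq_nonneg _)
      (tendsto_comp_exp_neg_atTop (hasDerivAt_primitiveOfWaveletSq 0).continuousAt))

lemma integral_gompertzWavelet : ∫ t, gompertzWavelet t = 0 := by
  rw [integral_of_hasDerivAt_of_tendsto hasDerivAt_primitiveOfWavelet_exp_neg
    integrable_gompertzWavelet (tendsto_comp_exp_neg_atBot tendsto_primitiveOfWavelet_atTop)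
    (tendsto_comp_exp_neg_atTop (hasDerivAt_primitiveOfWavelet 0).continuousAt)]
  simp [primitiveOfWavelet]

lemma integral_gompertzWavelet_sq : ∫ t, gompertzWavelet t ^ 2 = 1 := by
  rw [integral_of_hasDerivAt_of_tendsto hasDerivAt_primitiveOfWaveletSq_exp_neg
    integrable_gompertzWavelet_sq (tendsto_comp_exp_neg_atBot tendsto_primitiveOfWaveletSq_atTop)
    (tendsto_comp_exp_neg_atTop (hasDerivAt_primitiveOfWaveletSq 0).continuousAt)]
  simp [primitiveOfWaveletSq]

theorem gompertz_wavelet_normalized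
    (ψ : ℝ → ℝ)
    (hψ : ∀ t, ψ t = 2 * Real.sqrt 2 *
      (Real.exp (-Real.exp (-t)) * Real.exp (-t) * (Real.exp (-t) - 1))) :
    Real.sqrt (∫ t : ℝ, (ψ t) ^ 2) = 1 ∧ ∫ t : ℝ, ψ t = 0 := by
  obtain rfl : ψ = gompertzWavelet := funext hψ
  exact ⟨by rw [integral_gompertzWavelet_sq, sqrt_one], integral_gompertzWavelet⟩
end

section
/- For each n ≥ 2, the n-th derivative of the standard Gompertz function x(t) = exp(-exp(-t)) is integrable on ℝ, with ∫_{-∞}^∞ |x^(n)(t)| dt ≤ Σ_{k=1}^{n} S(n,k) * (k-1)!, where S(n,k) is the Stirling number of the second kind. -/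
open Real MeasureTheory Set

section ExpNegSubstitution

variable {E : Type*} [NormedAddCommGroup E] [NormedSpace ℝ E]

theorem image_exp_neg_univ : (fun t : ℝ => exp (-t)) '' univ = Ioi 0 := by
  rw [image_univ, ← range_exp]
  exact neg_surjective.range_comp exp

theorem hasDerivAt_exp_neg (t : ℝ) : HasDerivAt (fun t : ℝ => exp (-t)) (-exp (-t)) t := by
  simpa using (hasDerivAt_neg t).exp

theorem integrable_comp_exp_neg_iff (g : ℝ → E) :
    Integrable (fun t => exp (-t) • g (exp (-t))) ↔ IntegrableOn g (Ioi 0) := by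
  have := integrableOn_image_iff_integrableOn_abs_deriv_smul MeasurableSet.univ
    (fun t _ => (hasDerivAt_exp_neg t).hasDerivWithinAt)
    (exp_injective.comp neg_injective).injOn g
  rw [image_exp_neg_univ, integrableOn_univ] at this
  simpa [abs_of_pos (exp_pos _)] using this.symm

theorem integral_comp_exp_neg (g : ℝ → E) :
    ∫ t, exp (-t) • g (exp (-t)) = ∫ u in Ioi 0, g u := by
  have := integral_image_eq_integral_abs_deriv_smul MeasurableSet.univ
    (fun t _ => (hasDerivAt_exp_neg t).hasDerivWithinAt)
    (exp_injective.comp neg_injective).injOn g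
  rw [image_exp_neg_univ, setIntegral_univ] at this
  simpa [abs_of_pos (exp_pos _)] using this.symm

end ExpNegSubstitution

theorem integrableOn_exp_neg_mul_pow (k : ℕ) :
    IntegrableOn (fun u : ℝ => exp (-u) * u ^ k) (Ioi 0) := by
  simpa using GammaIntegral_convergent (s := k + 1) (by positivity)

theorem integral_exp_neg_mul_pow (k : ℕ) :
    ∫ u in Ioi (0 : ℝ), exp (-u) * u ^ k = k.factorial := by
  simpa using (Gamma_eq_integral (s := k + 1) (by positivity)).symm.trans (Gamma_nat_eq_factorial k)

theorem stirlingSecond_succ_zero (n : ℕ) : stirlingSecond (n + 1) 0 = 0 := rfl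

theorem stirlingSecond_eq_zero_of_lt {n k : ℕ} (h : n < k) : stirlingSecond n k = 0 := by
  induction n generalizing k with
  | zero => obtain ⟨k, rfl⟩ := Nat.exists_eq_add_one_of_ne_zero (by omega : k ≠ 0); rfl
  | succ n ih =>
    obtain ⟨k, rfl⟩ := Nat.exists_eq_add_one_of_ne_zero (by omega : k ≠ 0)
    simp [stirlingSecond, ih (by omega : n < k + 1), ih (by omega : n < k)]

noncomputable def gompertzTerm (k : ℕ) (t : ℝ) : ℝ := exp (-exp (-t)) * exp (-t) ^ k

noncomputable def gompertzCoeff (n k : ℕ) : ℝ := (-1) ^ (n + k) * stirlingSecond n k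

theorem gompertzTerm_nonneg (k : ℕ) (t : ℝ) : 0 ≤ gompertzTerm k t := by
  unfold gompertzTerm; positivity

theorem hasDerivAt_gompertzTerm (k : ℕ) (t : ℝ) :
    HasDerivAt (gompertzTerm k) (gompertzTerm (k + 1) t - k * gompertzTerm k t) t := by
  refine (((hasDerivAt_exp_neg t).fun_neg.exp).fun_mul
    ((hasDerivAt_exp_neg t).fun_pow k)).congr_deriv ?_
  rcases k with _ | k
  · simp [gompertzTerm]
  · simp only [gompertzTerm, Nat.add_sub_cancel]; push_cast; ring

theorem gompertzCoeff_succ_zero (n : ℕ) : gompertzCoeff (n + 1) 0 = 0 := by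
  simp [gompertzCoeff, stirlingSecond_succ_zero]

theorem gompertzCoeff_eq_zero_of_lt {n k : ℕ} (h : n < k) : gompertzCoeff n k = 0 := by
  simp [gompertzCoeff, stirlingSecond_eq_zero_of_lt h]

theorem gompertzCoeff_succ_succ (n k : ℕ) :
    gompertzCoeff (n + 1) (k + 1) = gompertzCoeff n k - (k + 1) * gompertzCoeff n (k + 1) := by
  simp only [gompertzCoeff, stirlingSecond]
  push_cast
  ring

theorem abs_gompertzCoeff (n k : ℕ) : |gompertzCoeff n k| = stirlingSecond n k := by
  simp [gompertzCoeff, abs_mul]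

theorem iteratedDeriv_gompertz (n : ℕ) :
    iteratedDeriv n (gompertzTerm 0) =
      fun t => ∑ k ∈ Finset.range (n + 1), gompertzCoeff n k * gompertzTerm k t := by
  induction n with
  | zero => funext t; simp [gompertzCoeff, stirlingSecond]
  | succ n ih =>
    funext t
    rw [iteratedDeriv_succ, ih,
      (HasDerivAt.fun_sum fun k _ => (hasDerivAt_gompertzTerm k t).const_mul _).deriv]
    set g : ℕ → ℝ := fun k => k * gompertzCoeff n k * gompertzTerm k t
    have hshift : ∑ k ∈ Finset.range (n + 1), g (k + 1) = ∑ k ∈ Finset.range (n + 1), g k := by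
      rw [← add_zero (∑ k ∈ _, g (k + 1)), show (0 : ℝ) = g 0 by simp [g],
        ← Finset.sum_range_succ', Finset.sum_range_succ,
        show g (n + 1) = 0 by simp [g, gompertzCoeff_eq_zero_of_lt], add_zero]
    rw [Finset.sum_range_succ' _ (n + 1), gompertzCoeff_succ_zero, zero_mul, add_zero]
    simp only [gompertzCoeff_succ_succ, sub_mul, mul_sub, Finset.sum_sub_distrib]
    simp only [g, Nat.cast_succ] at hshift
    rw [hshift]
    exact congrArg _ (Finset.sum_congr rfl fun k _ => by ring)

theorem iteratedDeriv_gompertz_eq_sum_Icc {n : ℕ} (hn : n ≠ 0) :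
    iteratedDeriv n (gompertzTerm 0) =
      fun t => ∑ k ∈ Finset.Icc 1 n, gompertzCoeff n k * gompertzTerm k t := by
  obtain ⟨n, rfl⟩ := Nat.exists_eq_add_one_of_ne_zero hn
  rw [iteratedDeriv_gompertz, ← Finset.Ico_add_one_right_eq_Icc]
  funext t
  rw [Finset.range_eq_Ico, Finset.sum_eq_sum_Ico_succ_bot (by omega), gompertzCoeff_succ_zero,
    zero_mul, zero_add]

theorem integrable_gompertzTerm {k : ℕ} (hk : k ≠ 0) : Integrable (gompertzTerm k) := by
  obtain ⟨k, rfl⟩ := Nat.exists_eq_add_one_of_ne_zero hk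
  refine ((integrable_comp_exp_neg_iff _).2 (integrableOn_exp_neg_mul_pow k)).congr
    (ae_of_all _ fun t => ?_)
  simp only [gompertzTerm, smul_eq_mul, pow_succ]
  ring

theorem integral_gompertzTerm {k : ℕ} (hk : k ≠ 0) :
    ∫ t, gompertzTerm k t = (k - 1).factorial := by
  obtain ⟨k, rfl⟩ := Nat.exists_eq_add_one_of_ne_zero hk
  rw [Nat.succ_sub_one, ← integral_exp_neg_mul_pow, ← integral_comp_exp_neg]
  refine integral_congr_ae (ae_of_all _ fun t => ?_)
  simp only [gompertzTerm, smul_eq_mul, pow_succ]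
  ring

theorem integral_abs_sum_le {α ι : Type*} [MeasurableSpace α] {μ : Measure α} (s : Finset ι)
    (c : ι → ℝ) {f : ι → α → ℝ} (hf : ∀ i ∈ s, Integrable (f i) μ) :
    ∫ a, |∑ i ∈ s, c i * f i a| ∂μ ≤ ∑ i ∈ s, |c i| * ∫ a, |f i a| ∂μ := by
  have hbound : ∀ a, |∑ i ∈ s, c i * f i a| ≤ ∑ i ∈ s, |c i| * |f i a| := fun a =>
    (Finset.abs_sum_le_sum_abs _ _).trans_eq (Finset.sum_congr rfl fun i _ => abs_mul _ _)
  have hint : ∀ i ∈ s, Integrable (fun a => |c i| * |f i a|) μ := fun i hi =>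
    (hf i hi).abs.const_mul _
  calc ∫ a, |∑ i ∈ s, c i * f i a| ∂μ ≤ ∫ a, ∑ i ∈ s, |c i| * |f i a| ∂μ :=
        integral_mono (integrable_finsetSum _ fun i hi => (hf i hi).const_mul _).abs
          (integrable_finsetSum _ hint) hbound
    _ = ∑ i ∈ s, |c i| * ∫ a, |f i a| ∂μ := by
        rw [integral_finsetSum _ hint]
        simp only [integral_const_mul]

theorem gompertz_nth_deriv_integrable
    (x : ℝ → ℝ) (hxdef : ∀ t, x t = Real.exp (-Real.exp (-t)))
    (n : ℕ) (hn : 2 ≤ n) :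
    MeasureTheory.Integrable (iteratedDeriv n x) ∧
      ∫ t : ℝ, |iteratedDeriv n x t| ≤
        ∑ k ∈ Finset.Icc 1 n, (stirlingSecond n k : ℝ) * (Nat.factorial (k - 1)) := by
  obtain rfl : x = gompertzTerm 0 := funext fun t => by simp [hxdef, gompertzTerm]
  have hint : ∀ k ∈ Finset.Icc 1 n, Integrable (gompertzTerm k) := fun k hk =>
    integrable_gompertzTerm (by simp at hk; omega)
  rw [iteratedDeriv_gompertz_eq_sum_Icc (by omega)]
  refine ⟨integrable_finsetSum _ fun k hk => (hint k hk).const_mul _, ?_⟩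
  refine (integral_abs_sum_le _ _ hint).trans_eq (Finset.sum_congr rfl fun k hk => ?_)
  simp only [abs_gompertzCoeff, abs_of_nonneg (gompertzTerm_nonneg _ _)]
  rw [integral_gompertzTerm (by simp at hk; omega)]
end
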